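/- Let F(x,y) = x·y·(x^10 − 11x^5y^5 − y^10) and H(x,y) = x^20 + 228x^15y^5 + 494x^10y^10 − 228x^5y^15 + y^20 in ℂ[x,y]. Then the Hessian determinant of H satisfies H_xx·H_yy − (H_xy)^2 = 1732800·F^3; in particular the critical polynomial of the icosahedral equivariant η = (a scalar multiple of) (H_y, −H_x) equals a nonzero constant times F^3, so its critical set is the 12 icosahedral vertices, each with multiplicity three. -/
import Mathlib


open MvPolynomial

/-- Klein's degree-12 icosahedral form `F(x,y) = x·y·(x^10 − 11x^5y^5 − y^10)`. -/
noncomputable def F : MvPolynomial (Fin 2) ℂ :=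
  X 0 * X 1 * ((X 0) ^ 10 - 11 * (X 0) ^ 5 * (X 1) ^ 5 - (X 1) ^ 10)

/-- Klein's degree-20 icosahedral form `H`. -/
noncomputable def H : MvPolynomial (Fin 2) ℂ :=
  (X 0) ^ 20 + 228 * (X 0) ^ 15 * (X 1) ^ 5 + 494 * (X 0) ^ 10 * (X 1) ^ 10
    - 228 * (X 0) ^ 5 * (X 1) ^ 15 + (X 1) ^ 20

lemma pderiv_ofNat' (i : Fin 2) (n : ℕ) [n.AtLeastTwo] :
    pderiv i (no_index (OfNat.ofNat n) : MvPolynomial (Fin 2) ℂ) = 0 := by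
  rw [(map_ofNat C n).symm, pderiv_C]

lemma Hx : pderiv 0 H = 20 * (X 0) ^ 19 + 3420 * (X 0) ^ 14 * (X 1) ^ 5
    + 4940 * (X 0) ^ 9 * (X 1) ^ 10 - 1140 * (X 0) ^ 4 * (X 1) ^ 15 := by
  simp only [H, map_add, map_sub, map_mul, Derivation.leibniz,
    Derivation.leibniz_pow, pderiv_X_self, pderiv_X_of_ne (by decide : (1:Fin 2) ≠ 0),
    pderiv_ofNat', smul_eq_mul]
  ring

lemma Hy : pderiv 1 H = 1140 * (X 0) ^ 15 * (X 1) ^ 4 + 4940 * (X 0) ^ 10 * (X 1) ^ 9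
    - 3420 * (X 0) ^ 5 * (X 1) ^ 14 + 20 * (X 1) ^ 19 := by
  simp only [H, map_add, map_sub, map_mul, Derivation.leibniz,
    Derivation.leibniz_pow, pderiv_X_self, pderiv_X_of_ne (by decide : (0:Fin 2) ≠ 1),
    pderiv_ofNat', smul_eq_mul]
  ring

lemma Hxx : pderiv 0 (pderiv 0 H) = 380 * (X 0) ^ 18 + 47880 * (X 0) ^ 13 * (X 1) ^ 5
    + 44460 * (X 0) ^ 8 * (X 1) ^ 10 - 4560 * (X 0) ^ 3 * (X 1) ^ 15 := by
  rw [Hx]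
  simp only [map_add, map_sub, map_mul, Derivation.leibniz,
    Derivation.leibniz_pow, pderiv_X_self, pderiv_X_of_ne (by decide : (1:Fin 2) ≠ 0),
    pderiv_ofNat', smul_eq_mul]
  ring

lemma Hyy : pderiv 1 (pderiv 1 H) = 4560 * (X 0) ^ 15 * (X 1) ^ 3
    + 44460 * (X 0) ^ 10 * (X 1) ^ 8 - 47880 * (X 0) ^ 5 * (X 1) ^ 13
    + 380 * (X 1) ^ 18 := by
  rw [Hy]
  simp only [map_add, map_sub, map_mul, Derivation.leibniz,
    Derivation.leibniz_pow, pderiv_X_self, pderiv_X_of_ne (by decide : (0:Fin 2) ≠ 1),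
    pderiv_ofNat', smul_eq_mul]
  ring

lemma Hxy : pderiv 0 (pderiv 1 H) = 17100 * (X 0) ^ 14 * (X 1) ^ 4
    + 49400 * (X 0) ^ 9 * (X 1) ^ 9 - 17100 * (X 0) ^ 4 * (X 1) ^ 14 := by
  rw [Hy]
  simp only [map_add, map_sub, map_mul, Derivation.leibniz,
    Derivation.leibniz_pow, pderiv_X_self, pderiv_X_of_ne (by decide : (1:Fin 2) ≠ 0),
    pderiv_ofNat', smul_eq_mul]
  ring

lemma Hyx : pderiv 1 (pderiv 0 H) = 17100 * (X 0) ^ 14 * (X 1) ^ 4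
    + 49400 * (X 0) ^ 9 * (X 1) ^ 9 - 17100 * (X 0) ^ 4 * (X 1) ^ 14 := by
  rw [Hx]
  simp only [map_add, map_sub, map_mul, Derivation.leibniz,
    Derivation.leibniz_pow, pderiv_X_self, pderiv_X_of_ne (by decide : (0:Fin 2) ≠ 1),
    pderiv_ofNat', smul_eq_mul]
  ring

set_option maxHeartbeats 1000000 in
/-- The Hessian determinant of `H` equals `1732800·F^3`; in particular the critical
polynomial (Jacobian determinant) of the icosahedral equivariant `η = (H_y, −H_x)`
is a nonzero constant multiple of `F^3`, so its critical set is the 12 icosahedral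
vertices, each with multiplicity three. -/
theorem hessian_of_H_eq_F_cubed :
    pderiv 0 (pderiv 0 H) * pderiv 1 (pderiv 1 H) - (pderiv 0 (pderiv 1 H)) ^ 2
      = 1732800 * F ^ 3 ∧
    ∃ c : ℂ, c ≠ 0 ∧
      pderiv 0 (pderiv 1 H) * pderiv 1 (-(pderiv 0 H))
        - pderiv 1 (pderiv 1 H) * pderiv 0 (-(pderiv 0 H)) = C c * F ^ 3 := by
  have key : pderiv 0 (pderiv 0 H) * pderiv 1 (pderiv 1 H) - (pderiv 0 (pderiv 1 H)) ^ 2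
      = 1732800 * F ^ 3 := by
    rw [Hxx, Hyy, Hxy, F]
    ring
  refine ⟨key, 1732800, by norm_num, ?_⟩
  have hC : (C (1732800 : ℂ) : MvPolynomial (Fin 2) ℂ) = 1732800 := map_ofNat C 1732800
  rw [hC, map_neg, map_neg, Hyx, Hxx, Hxy, Hyy, F]
  ring
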